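/- arXiv:1906.01045 — 3 statements merged into one kernel-verified Lean document; each statement's English description precedes it below -/
import Mathlib

section
/- Let G be a group of unitary operators on a finite-dimensional Hilbert space of dimension at least 2, and let S be a finite, non-empty subset of the unitary group containing a non-scalar element, such that every element of G normalises S (i.e., g s g⁻¹ ∈ S for all g ∈ G, s ∈ S). Then G is not dense in the full unitary group U(d). -/
/-! Density of `G` puts every unitary conjugate `u s u⋆` into the finite set `S`. Along a
one-parameter unitary group `t ↦ exp (i t x)`, `x` self-adjoint, the conjugates of `s` form a
connected subset of a finite set, hence are constant; differentiating at `t = 0` shows that `s`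
commutes with every self-adjoint `x`, hence with every matrix, so `s` is scalar. -/

open NormedSpace

theorem commute_of_forall_commute_exp_smul {𝕂 𝔸 : Type*} [RCLike 𝕂] [NormedRing 𝔸]
    [NormedAlgebra 𝕂 𝔸] [CompleteSpace 𝔸] {a b : 𝔸}
    (h : ∀ t : 𝕂, Commute (exp (t • b)) a) : Commute b a := by
  have hl := (hasDerivAt_exp_smul_const b (0 : 𝕂)).mul_const a
  have hr := (hasDerivAt_exp_smul_const' b (0 : 𝕂)).const_mul a
  simp only [fun t : 𝕂 ↦ (h t).eq] at hl
  show b * a = a * b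
  simpa [mul_assoc] using hl.unique hr

section Unitary

variable {A : Type*} [NormedRing A] [NormedAlgebra ℂ A] [StarRing A] [ContinuousStar A]
  [CompleteSpace A] [StarModule ℂ A]

open Complex selfAdjoint

theorem mem_center_of_unitary_conj_mem_finite {a : A} {F : Set A} (hF : F.Finite)
    (h : ∀ u ∈ unitary A, u * a * star u ∈ F) : a ∈ Set.center A := by
  have hsa : ∀ x : selfAdjoint A, Commute (x : A) a := by
    intro x
    have hpath : Continuous fun t : ℝ ↦ (expUnitary (t • x) : A) :=
      continuous_subtype_val.comp (continuous_expUnitary.comp (continuous_id.smul continuous_const))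
    have hexp : ∀ t : ℝ, Commute (exp (t • (I • (x : A)))) a := by
      intro t
      have hconj := isPreconnected_univ.constant_of_mapsTo hF.isDiscrete
        ((hpath.mul continuous_const).mul hpath.star).continuousOn
        (fun t _ ↦ h _ (expUnitary (t • x)).2) (Set.mem_univ t) (Set.mem_univ 0)
      rw [smul_comm, ← val_smul, ← expUnitary_coe,
        commute_unitary_iff_star_right_conjugate (expUnitary _).2]
      simpa using hconj
    simpa [smul_smul] using (commute_of_forall_commute_exp_smul hexp).smul_left I⁻¹
  refine Semigroup.mem_center_iff.mpr fun b ↦ ?_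
  rw [← realPart_add_I_smul_imaginaryPart b]
  exact ((hsa _).add_left ((hsa _).smul_left I)).eq

end Unitary

theorem stmt_0_general (d : ℕ)
    (G : Subgroup (Matrix.unitaryGroup (Fin d) ℂ))
    (S : Finset (Matrix.unitaryGroup (Fin d) ℂ))
    (hns : ∃ s ∈ S, ∀ c : ℂ, (s : Matrix (Fin d) (Fin d) ℂ) ≠ c • (1 : Matrix (Fin d) (Fin d) ℂ))
    (hnorm : ∀ g ∈ G, ∀ s ∈ S, g * s * g⁻¹ ∈ S) :
    ¬ Dense (G : Set (Matrix.unitaryGroup (Fin d) ℂ)) := by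
  intro hG
  obtain ⟨s, hsS, hs⟩ := hns
  have hconj : ∀ u : Matrix.unitaryGroup (Fin d) ℂ, u * s * u⁻¹ ∈ S := by
    have hmaps := Set.MapsTo.closure (fun g hg ↦ hnorm g hg s hsS)
      (by fun_prop : Continuous fun u : Matrix.unitaryGroup (Fin d) ℂ ↦ u * s * u⁻¹)
    rw [hG.closure_eq, S.finite_toSet.isClosed.closure_eq] at hmaps
    exact fun u ↦ hmaps (Set.mem_univ u)
  let := Matrix.instCStarAlgebra (n := Fin d)
  have hcenter : (s : Matrix (Fin d) (Fin d) ℂ) ∈ Set.center _ :=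
    mem_center_of_unitary_conj_mem_finite (S.finite_toSet.image Subtype.val)
      fun u hu ↦ ⟨_, hconj ⟨u, hu⟩, rfl⟩
  rw [Matrix.center_eq_scalar_image] at hcenter
  obtain ⟨c, -, hc⟩ := hcenter
  exact hs c (by rw [← hc, Matrix.smul_one_eq_diagonal]; rfl)

/-- A group of unitaries normalising a finite non-empty set of unitaries containing a
non-scalar element cannot be dense in the unitary group `U(d)` for `d ≥ 2`. -/
theorem stmt_0 (d : ℕ) (hd : 2 ≤ d)
    (G : Subgroup (Matrix.unitaryGroup (Fin d) ℂ))
    (S : Finset (Matrix.unitaryGroup (Fin d) ℂ))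
    (hne : S.Nonempty)
    (hns : ∃ s ∈ S, ∀ c : ℂ, (s : Matrix (Fin d) (Fin d) ℂ) ≠ c • (1 : Matrix (Fin d) (Fin d) ℂ))
    (hnorm : ∀ g ∈ G, ∀ s ∈ S, g * s * g⁻¹ ∈ S) :
    ¬ Dense (G : Set (Matrix.unitaryGroup (Fin d) ℂ)) :=
  stmt_0_general d G S hns hnorm
end

section
/- If a subgroup G of U(d) (d ≥ 2) normalises a finite subgroup P of U(d) that contains a non-scalar element, then the closure of G in U(d) is a proper subgroup of U(d). -/
/-!
If the closure of `G` were all of `U(d)`, then, since `{u | u p u⁻¹ ∈ P}` is closed (`P` is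
finite) and contains `G`, every unitary conjugate of a non-scalar `p ∈ P` would lie in the finite
set `P`. Along the identity component of `U(d)` the conjugate `u p u⁻¹` then cannot move, so `p`
commutes with that component. For a Hermitian involution `X` the path `t ↦ cos t + i sin t X`
joins `1` to `iX`, so `p` commutes with every Hermitian involution; the involutions `1 - 2 Eᵢᵢ` and
the transposition matrices generate all matrix units, forcing `p` to be scalar.
-/

section FiniteConjugacyOrbit

variable {H : Type*} [Group H] [TopologicalSpace H] [IsTopologicalGroup H] [T1Space H]
  {S : Set H} {p : H}

lemma conj_mem_of_mem_closure (hS : S.Finite) {G : Set H} (hG : ∀ g ∈ G, g * p * g⁻¹ ∈ S)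
    {u : H} (hu : u ∈ closure G) : u * p * u⁻¹ ∈ S :=
  closure_minimal hG (hS.isClosed.preimage (by fun_prop)) hu

lemma commute_of_mem_connectedComponent_one (hS : S.Finite) (hp : ∀ u, u * p * u⁻¹ ∈ S)
    {u : H} (hu : u ∈ connectedComponent 1) : Commute u p := by
  have : Finite S := hS.to_subtype
  have hconst : u * p * u⁻¹ = 1 * p * 1⁻¹ :=
    isPreconnected_connectedComponent.constant_of_mapsTo
      (isDiscrete_iff_discreteTopology.mpr inferInstance) (by fun_prop : Continuous _).continuousOn
      (fun v _ => hp v) hu mem_connectedComponent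
  rw [one_mul, inv_one, mul_one, mul_inv_eq_iff_eq_mul] at hconst
  exact hconst

end FiniteConjugacyOrbit

namespace Matrix

variable {n R : Type*} [DecidableEq n] [CommRing R]

lemma isSelfAdjoint_one_sub_two_smul_single [StarRing R] (i : n) :
    IsSelfAdjoint (1 - (2 : R) • single i i 1 : Matrix n n R) := by
  simp [IsSelfAdjoint, star_eq_conjTranspose]

lemma one_sub_two_smul_single_mul_self [Fintype n] (i : n) :
    (1 - (2 : R) • single i i 1 : Matrix n n R) * (1 - (2 : R) • single i i 1) = 1 := by
  simp only [sub_mul, mul_sub, one_mul, mul_one, smul_mul_smul, single_mul_single_same]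
  module

lemma isSelfAdjoint_swap_permMatrix [StarRing R] (i j : n) :
    IsSelfAdjoint ((Equiv.swap i j).permMatrix R) := by
  rw [IsSelfAdjoint, star_eq_conjTranspose, conjTranspose_permMatrix, Equiv.swap_inv]

lemma swap_permMatrix_mul_self [Fintype n] (i j : n) :
    (Equiv.swap i j).permMatrix R * (Equiv.swap i j).permMatrix R = 1 := by
  rw [← permMatrix_mul, Equiv.swap_mul_self, permMatrix_one]

lemma single_one_mul_swap_permMatrix [Fintype n] (i j : n) :
    single i i (1 : R) * (Equiv.swap i j).permMatrix R = single i j 1 := by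
  ext a b
  simp [PEquiv.mul_toMatrix_toPEquiv, single_apply, eq_comm (a := i), eq_comm (a := j),
    Equiv.swap_apply_eq_iff]

lemma mem_range_scalar_of_commute_isSelfAdjoint_involution [Fintype n] [StarRing R]
    [Invertible (2 : R)] {M : Matrix n n R}
    (hM : ∀ X : Matrix n n R, IsSelfAdjoint X → X * X = 1 → Commute X M) :
    M ∈ Set.range (scalar n) := by
  have hsingle (i : n) : Commute (single i i 1) M := by
    have hD := hM _ (isSelfAdjoint_one_sub_two_smul_single i) (one_sub_two_smul_single_mul_self i)
    have : single i i (1 : R) = (⅟2 : R) • (1 - (1 - (2 : R) • single i i 1 : Matrix n n R)) := by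
      rw [sub_sub_cancel, smul_smul, invOf_mul_self, one_smul]
    rw [this]
    exact ((Commute.one_left M).sub_left hD).smul_left _
  refine mem_range_scalar_of_commute_single fun i j _ => ?_
  simp only [← single_one_mul_swap_permMatrix i j]
  exact (hsingle i).mul_left
    (hM _ (isSelfAdjoint_swap_permMatrix i j) (swap_permMatrix_mul_self i j))

end Matrix

section SelfAdjointInvolution

open Complex

variable {A : Type*} [Ring A] [StarRing A] [Algebra ℂ A] [StarModule ℂ A]
  {X : A}

lemma ofReal_smul_one_add_I_mul_ofReal_smul_mem_unitary (hX : IsSelfAdjoint X) (hX2 : X * X = 1)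
    {c s : ℝ} (hcs : c ^ 2 + s ^ 2 = 1) : (c : ℂ) • (1 : A) + (I * s) • X ∈ unitary A := by
  have hstar : star ((c : ℂ) • (1 : A) + (I * s) • X) = (c : ℂ) • (1 : A) - (I * s) • X := by
    simp [star_smul, hX.star_eq, sub_eq_add_neg]
  have hnorm : (c : ℂ) * c - (I * s) * (I * s) = 1 := by
    have hcs' : (c : ℂ) ^ 2 + (s : ℂ) ^ 2 = 1 := by exact_mod_cast hcs
    linear_combination hcs' - (s : ℂ) ^ 2 * I_sq
  rw [Unitary.mem_iff, hstar]
  constructor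
  · simp only [sub_mul, mul_add, smul_mul_smul, one_mul, mul_one, hX2]
    linear_combination (norm := module) hnorm • (1 : A)
  · simp only [add_mul, mul_sub, smul_mul_smul, one_mul, mul_one, hX2]
    linear_combination (norm := module) hnorm • (1 : A)

variable [TopologicalSpace A] [ContinuousAdd A] [ContinuousSMul ℂ A]

lemma exists_mem_connectedComponent_one_coe_eq_I_smul (hX : IsSelfAdjoint X) (hX2 : X * X = 1) :
    ∃ u ∈ connectedComponent (1 : unitary A), (u : A) = I • X := by
  let path : ℝ → unitary A := fun t =>
    ⟨(Real.cos t : ℂ) • 1 + (I * Real.sin t) • X,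
      ofReal_smul_one_add_I_mul_ofReal_smul_mem_unitary hX hX2 (Real.cos_sq_add_sin_sq t)⟩
  have hpath : Continuous path := by fun_prop
  have hpath_zero : path 0 = 1 := Subtype.ext (by simp [path])
  refine ⟨path (Real.pi / 2), ?_, by simp [path]⟩
  exact (isPreconnected_range hpath).subset_connectedComponent ⟨0, hpath_zero⟩ ⟨_, rfl⟩

end SelfAdjointInvolution

theorem stmt_1_general (d : ℕ)
    (G P : Subgroup (Matrix.unitaryGroup (Fin d) ℂ))
    (hPfin : (P : Set (Matrix.unitaryGroup (Fin d) ℂ)).Finite)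
    (hns : ∃ p ∈ P, ∀ c : ℂ, (p : Matrix (Fin d) (Fin d) ℂ) ≠ c • (1 : Matrix (Fin d) (Fin d) ℂ))
    (hnorm : ∀ g ∈ G, ∀ p, p ∈ P ↔ g * p * g⁻¹ ∈ P) :
    closure (G : Set (Matrix.unitaryGroup (Fin d) ℂ)) ≠ Set.univ := by
  intro hdense
  obtain ⟨p, hpP, hp⟩ := hns
  have hconj (u : Matrix.unitaryGroup (Fin d) ℂ) : u * p * u⁻¹ ∈ (P : Set _) :=
    conj_mem_of_mem_closure hPfin (fun g hg => (hnorm g hg p).mp hpP) (hdense ▸ Set.mem_univ u)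
  obtain ⟨c, hc⟩ : (p : Matrix (Fin d) (Fin d) ℂ) ∈ Set.range (Matrix.scalar (Fin d)) := by
    refine Matrix.mem_range_scalar_of_commute_isSelfAdjoint_involution fun X hX hX2 => ?_
    obtain ⟨u, hu, huX⟩ := exists_mem_connectedComponent_one_coe_eq_I_smul hX hX2
    have hIX : Commute (Complex.I • X) (p : Matrix (Fin d) (Fin d) ℂ) := by
      rw [← huX]
      exact (commute_of_mem_connectedComponent_one hPfin hconj hu).map (unitary _).subtype
    simpa [smul_smul, Complex.I_ne_zero] using hIX.smul_left Complex.I⁻¹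
  exact hp c (by rw [← hc, Matrix.scalar_apply, Matrix.smul_one_eq_diagonal])

/-- If a subgroup `G` of `U(d)` (`d ≥ 2`) normalises a finite subgroup `P` containing a
non-scalar element, then the closure of `G` is a proper subset of `U(d)`. -/
theorem stmt_1 (d : ℕ) (hd : 2 ≤ d)
    (G P : Subgroup (Matrix.unitaryGroup (Fin d) ℂ))
    (hPfin : (P : Set (Matrix.unitaryGroup (Fin d) ℂ)).Finite)
    (hns : ∃ p ∈ P, ∀ c : ℂ, (p : Matrix (Fin d) (Fin d) ℂ) ≠ c • (1 : Matrix (Fin d) (Fin d) ℂ))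
    (hnorm : ∀ g ∈ G, ∀ p, p ∈ P ↔ g * p * g⁻¹ ∈ P) :
    closure (G : Set (Matrix.unitaryGroup (Fin d) ℂ)) ≠ Set.univ :=
  stmt_1_general d G P hPfin hns hnorm
end

section
/- For any unitary U on ℂ² and qubits x, y: the circuit consisting of (1) preparing the second qubit in state |+⟩ = (|0⟩+|1⟩)/√2, (2) applying CZ between the two qubits, (3) measuring the first qubit in the X basis, and (4) applying X to the second qubit conditioned on outcome −1, maps an arbitrary input state |ψ⟩ on the first qubit to H|ψ⟩ on the second qubit (up to global phase), for both measurement outcomes. -/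
/-!
`CZ` turns `|ψ⟩|+⟩` into `2^{-1/2} ∑_{a,b} (-1)^{ab} ψ_a |a⟩|b⟩`, so contracting the first qubit
with `⟨+|` leaves `2^{-1/2} (H ψ)`, and contracting it with `⟨-|` leaves `2^{-1/2} X (H ψ)`;
since `X² = 1` both outcomes give `H ψ` with the scalar `2^{-1/2}`.
-/

open Matrix

namespace Stmt10

/-- The Hadamard gate. -/
noncomputable def Hg : Matrix (Fin 2) (Fin 2) ℂ :=
  (((Real.sqrt 2)⁻¹ : ℝ) : ℂ) • !![1, 1; 1, -1]

/-- Pauli `X`. -/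
def Xg : Matrix (Fin 2) (Fin 2) ℂ := !![0, 1; 1, 0]

/-- Two-qubit controlled-`Z`. -/
def CZ : Matrix (Fin 2 × Fin 2) (Fin 2 × Fin 2) ℂ :=
  Matrix.diagonal fun p => if p.1 = 1 ∧ p.2 = 1 then -1 else 1

/-- The state `|+⟩`. -/
noncomputable def plus : Fin 2 → ℂ := fun _ => (((Real.sqrt 2)⁻¹ : ℝ) : ℂ)

/-- The state `|−⟩`. -/
noncomputable def minus : Fin 2 → ℂ :=
  fun a => if a = 0 then (((Real.sqrt 2)⁻¹ : ℝ) : ℂ) else -(((Real.sqrt 2)⁻¹ : ℝ) : ℂ)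

lemma ofReal_inv_sqrt_two_ne_zero : (((Real.sqrt 2)⁻¹ : ℝ) : ℂ) ≠ 0 :=
  Complex.ofReal_ne_zero.mpr (by positivity)

lemma CZ_mulVec_apply (v : Fin 2 × Fin 2 → ℂ) (a b : Fin 2) :
    CZ.mulVec v (a, b) = (if a = 1 ∧ b = 1 then -1 else 1) * v (a, b) := by
  simp [CZ, mulVec_diagonal]

lemma Hg_mulVec (ψ : Fin 2 → ℂ) :
    Hg.mulVec ψ = (((Real.sqrt 2)⁻¹ : ℝ) : ℂ) • ![ψ 0 + ψ 1, ψ 0 - ψ 1] := by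
  ext b
  fin_cases b <;> simp [Hg, mulVec, dotProduct, Fin.sum_univ_two] <;> ring

lemma Xg_mulVec (v : Fin 2 → ℂ) : Xg.mulVec v = ![v 1, v 0] := by
  ext b
  fin_cases b <;> simp [Xg, mulVec, dotProduct, Fin.sum_univ_two]

lemma plus_contract_CZ_mulVec (ψ : Fin 2 → ℂ) :
    (fun b => ∑ a, (starRingEnd ℂ) (plus a) * CZ.mulVec (fun p => ψ p.1 * plus p.2) (a, b)) =
      (((Real.sqrt 2)⁻¹ : ℝ) : ℂ) • Hg.mulVec ψ := by
  rw [Hg_mulVec]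
  ext b
  fin_cases b <;> simp [CZ_mulVec_apply, Fin.sum_univ_two, plus, Complex.conj_ofReal] <;> ring

lemma Xg_mulVec_minus_contract_CZ_mulVec (ψ : Fin 2 → ℂ) :
    Xg.mulVec
        (fun b => ∑ a, (starRingEnd ℂ) (minus a) * CZ.mulVec (fun p => ψ p.1 * plus p.2) (a, b)) =
      (((Real.sqrt 2)⁻¹ : ℝ) : ℂ) • Hg.mulVec ψ := by
  rw [Xg_mulVec, Hg_mulVec]
  ext b
  fin_cases b <;>
    simp [CZ_mulVec_apply, Fin.sum_univ_two, plus, minus, Complex.conj_ofReal] <;> ring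

/-- The state-injection gadget: prepare qubit 2 in `|+⟩`, apply `CZ`, measure qubit 1 in
the `X` basis, and apply `X` to qubit 2 on outcome `−1`.  For either outcome the
resulting state of qubit 2 is `H|ψ⟩`, up to a nonzero scalar. -/
theorem stmt_10 (ψ : Fin 2 → ℂ) :
    let st : Fin 2 × Fin 2 → ℂ := CZ.mulVec fun p => ψ p.1 * plus p.2
    (∃ c : ℂ, c ≠ 0 ∧
      (fun b => ∑ a, (starRingEnd ℂ) (plus a) * st (a, b)) = c • Hg.mulVec ψ) ∧
    (∃ c : ℂ, c ≠ 0 ∧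
      Xg.mulVec (fun b => ∑ a, (starRingEnd ℂ) (minus a) * st (a, b)) = c • Hg.mulVec ψ) :=
  ⟨⟨_, ofReal_inv_sqrt_two_ne_zero, plus_contract_CZ_mulVec ψ⟩,
    ⟨_, ofReal_inv_sqrt_two_ne_zero, Xg_mulVec_minus_contract_CZ_mulVec ψ⟩⟩

end Stmt10
end
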